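/- arXiv:2002.09606 — 3 statements merged into one kernel-verified Lean document; each statement's English description precedes it below -/
import Mathlib

section
/- Let n and k be positive integers with n ≥ k, and let X be a real n×k matrix of rank k such that each column j of X takes at most two values, determined by a bipartition (C_{(j)1}, C_{(j)2}) of {1,…,n}: X_{i,j} = a_j if i ∈ C_{(j)1} and X_{i,j} = b_j if i ∈ C_{(j)2}. Let L be any invertible lower triangular k×k real matrix with XᵀX = LLᵀ, and set Q = X (Lᵀ)⁻¹. Then for every level j ∈ {1,…,k}, every multi-index (h_1,…,h_j) ∈ {1,2}^j, and every pair of indices i, i' lying in the same cell V = C_{(1)h_1} ∩ C_{(2)h_2} ∩ ⋯ ∩ C_{(j)h_j}, one has Q_{i,j} = Q_{i',j}. -/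
open Matrix

/-- **Multi-scale partition on the Stiefel manifold (equal values within cells).**
Let `X` be a real `n × k` matrix of rank `k` whose `j`-th column takes value `a j`
on the cell `C j 0` and `b j` on the cell `C j 1` of a bipartition of `{1,…,n}`.
If `L` is an invertible lower triangular matrix with `Xᵀ X = L Lᵀ` and
`Q = X (Lᵀ)⁻¹`, then for any level `j`, any multi-index `h : Fin k → Fin 2`,
and any indices `i, i'` lying in the same cell
`V = C 0 (h 0) ∩ ⋯ ∩ C j (h j)`, one has `Q i j = Q i' j`. -/
theorem cholesky_whitening_multiscale_partition
    (n k : ℕ) (hn : 0 < n) (hk : 0 < k) (hnk : k ≤ n)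
    (X : Matrix (Fin n) (Fin k) ℝ) (hrank : X.rank = k)
    (C : Fin k → Fin 2 → Set (Fin n))
    (hCunion : ∀ j, C j 0 ∪ C j 1 = Set.univ)
    (hCdisj : ∀ j, C j 0 ∩ C j 1 = ∅)
    (a b : Fin k → ℝ)
    (hXa : ∀ i j, i ∈ C j 0 → X i j = a j)
    (hXb : ∀ i j, i ∈ C j 1 → X i j = b j)
    (L : Matrix (Fin k) (Fin k) ℝ) (hLinv : IsUnit L)
    (hLlower : ∀ p q : Fin k, p < q → L p q = 0)
    (hChol : Xᵀ * X = L * Lᵀ)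
    (Q : Matrix (Fin n) (Fin k) ℝ) (hQ : Q = X * (Lᵀ)⁻¹)
    (j : Fin k) (h : Fin k → Fin 2) (i i' : Fin n)
    (hi : ∀ m : Fin k, m ≤ j → i ∈ C m (h m))
    (hi' : ∀ m : Fin k, m ≤ j → i' ∈ C m (h m)) :
    Q i j = Q i' j := by
  have hLT : IsUnit Lᵀ := (Matrix.isUnit_transpose L).mpr hLinv
  have : Invertible Lᵀ := hLT.invertible
  have hupper : BlockTriangular Lᵀ id := by
    intro p q hpq
    exact hLlower q p hpq
  have hinv : BlockTriangular (Lᵀ)⁻¹ id :=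
    blockTriangular_inv_of_blockTriangular hupper
  have hX : ∀ m : Fin k, m ≤ j → X i m = X i' m := by
    intro m hm
    have h1 := hi m hm
    have h2 := hi' m hm
    rcases Fin.exists_fin_two.mp ⟨h m, rfl⟩ with h0 | h1'
    · rw [h0] at h1 h2
      rw [hXa i m h1, hXa i' m h2]
    · rw [h1'] at h1 h2
      rw [hXb i m h1, hXb i' m h2]
  subst hQ
  simp only [Matrix.mul_apply]
  apply Finset.sum_congr rfl
  intro m _
  by_cases hm : m ≤ j
  · rw [hX m hm]
  · have : (Lᵀ)⁻¹ m j = 0 := hinv (lt_of_not_ge hm)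
    rw [this, mul_zero, mul_zero]
end

section
/- Let n and k be positive integers with n ≥ k, and let X be a real n×k matrix of rank k such that each column of X takes at most two distinct values. Let L be any invertible lower triangular k×k real matrix with XᵀX = LLᵀ, and set Q = X (Lᵀ)⁻¹. Then for every j ∈ {1,…,k}, the j-th column of Q, i.e., the set {Q_{i,j} : i ∈ {1,…,n}}, contains at most 2^j distinct values. -/
open Matrix

/-- **At most `2^j` unique values in the `j`-th column of the Cholesky whitening
transform.** If each column of the rank-`k` matrix `X ∈ ℝ^{n×k}` takes at most two
distinct values, `L` is an invertible lower triangular matrix with `Xᵀ X = L Lᵀ`,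
and `Q = X (Lᵀ)⁻¹`, then the `j`-th column of `Q` (0-indexed here, so the
1-indexed level is `j+1`) contains at most `2^(j+1)` distinct values. -/
theorem cholesky_whitening_column_card
    (n k : ℕ) (hn : 0 < n) (hk : 0 < k) (hnk : k ≤ n)
    (X : Matrix (Fin n) (Fin k) ℝ) (hrank : X.rank = k)
    (hXtwo : ∀ j : Fin k, (Finset.univ.image (fun i : Fin n => X i j)).card ≤ 2)
    (L : Matrix (Fin k) (Fin k) ℝ) (hLinv : IsUnit L)
    (hLlower : ∀ p q : Fin k, p < q → L p q = 0)
    (hChol : Xᵀ * X = L * Lᵀ)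
    (Q : Matrix (Fin n) (Fin k) ℝ) (hQ : Q = X * (Lᵀ)⁻¹)
    (j : Fin k) :
    (Finset.univ.image (fun i : Fin n => Q i j)).card ≤ 2 ^ ((j : ℕ) + 1) := by
  classical
  -- Lᵀ is block triangular (upper triangular), hence so is its inverse
  have hLTunit : IsUnit (Lᵀ) := by
    rw [Matrix.isUnit_iff_isUnit_det, Matrix.det_transpose,
      ← Matrix.isUnit_iff_isUnit_det]
    exact hLinv
  haveI : Invertible (Lᵀ) := hLTunit.invertible
  have hbt : (Lᵀ).BlockTriangular id := by
    intro p q h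
    exact hLlower q p h
  have hbtinv : ((Lᵀ)⁻¹).BlockTriangular id :=
    Matrix.blockTriangular_inv_of_blockTriangular hbt
  -- Q i j depends only on the restricted row vector
  set R : Fin n → (Fin k → ℝ) := fun i p => if p ≤ j then X i p else 0 with hR
  have hQeq : ∀ i : Fin n, Q i j = ∑ p : Fin k, R i p * (Lᵀ)⁻¹ p j := by
    intro i
    rw [hQ]
    simp only [Matrix.mul_apply]
    apply Finset.sum_congr rfl
    intro p _
    by_cases hp : p ≤ j
    · simp [hR, hp]
    · have : (Lᵀ)⁻¹ p j = 0 := hbtinv (lt_of_not_ge hp)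
      simp [this]
  -- factor through the image of R
  have key : (Finset.univ.image (fun i : Fin n => Q i j))
      ⊆ (Finset.univ.image R).image (fun v => ∑ p : Fin k, v p * (Lᵀ)⁻¹ p j) := by
    intro x hx
    simp only [Finset.mem_image, Finset.mem_univ, true_and] at hx ⊢
    obtain ⟨i, hi⟩ := hx
    exact ⟨R i, ⟨i, rfl⟩, by rw [← hQeq i, hi]⟩
  have h1 : (Finset.univ.image (fun i : Fin n => Q i j)).card
      ≤ (Finset.univ.image R).card :=
    le_trans (Finset.card_le_card key) (Finset.card_image_le)
  -- bound the image of R by a product set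
  set S : Fin k → Finset ℝ := fun p =>
    if p ≤ j then Finset.univ.image (fun i : Fin n => X i p) else {0} with hS
  have hsub : (Finset.univ.image R) ⊆ Fintype.piFinset S := by
    intro v hv
    simp only [Finset.mem_image, Finset.mem_univ, true_and] at hv
    obtain ⟨i, hi⟩ := hv
    rw [Fintype.mem_piFinset]
    intro p
    by_cases hp : p ≤ j
    · simp only [hS, hp, if_true, ← hi, hR, Finset.mem_image, Finset.mem_univ, true_and]
      exact ⟨i, rfl⟩
    · simp [hS, hp, ← hi, hR]
  have h2 : (Finset.univ.image R).card ≤ ∏ p : Fin k, (S p).card := by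
    calc (Finset.univ.image R).card ≤ (Fintype.piFinset S).card :=
          Finset.card_le_card hsub
      _ = ∏ p : Fin k, (S p).card := Fintype.card_piFinset S
  have h3 : ∏ p : Fin k, (S p).card ≤ ∏ p : Fin k, (if p ≤ j then 2 else 1) := by
    apply Finset.prod_le_prod
    · intro p _; exact Nat.zero_le _
    · intro p _
      by_cases hp : p ≤ j
      · simpa [hS, hp] using hXtwo p
      · simp [hS, hp]
  have h4 : ∏ p : Fin k, (if p ≤ j then 2 else 1) = 2 ^ ((j : ℕ) + 1) := by
    rw [Finset.prod_ite, Finset.prod_const, Finset.prod_const, one_pow, mul_one]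
    congr 1
    have : (Finset.univ.filter (fun p : Fin k => p ≤ j)) = Finset.Iic j := by
      ext p; simp
    rw [this, Fin.card_Iic]
  calc (Finset.univ.image (fun i : Fin n => Q i j)).card
      ≤ (Finset.univ.image R).card := h1
    _ ≤ ∏ p : Fin k, (S p).card := h2
    _ ≤ ∏ p : Fin k, (if p ≤ j then 2 else 1) := h3
    _ = 2 ^ ((j : ℕ) + 1) := h4
end

section
/- Let n and k be positive integers with n ≥ k, let X be a real n×k matrix of rank k, and let D be a k×k diagonal matrix with strictly positive diagonal entries. Let L be the unique lower triangular matrix with strictly positive diagonal entries satisfying XᵀX = LLᵀ, and let L' be the corresponding Cholesky factor of (XD)ᵀ(XD). Then (XD)(L'ᵀ)⁻¹ = X(Lᵀ)⁻¹, i.e., the Cholesky whitening transform Q is invariant under rescaling the columns of X by positive constants. -/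
open Matrix

private lemma lowerTri_blockTriangular {k : ℕ} {A : Matrix (Fin k) (Fin k) ℝ}
    (hA : ∀ p q : Fin k, p < q → A p q = 0) :
    A.BlockTriangular OrderDual.toDual := fun i j hij => hA i j hij

private lemma lowerTri_det_ne_zero {k : ℕ} {A : Matrix (Fin k) (Fin k) ℝ}
    (hA : ∀ p q : Fin k, p < q → A p q = 0) (hApos : ∀ p : Fin k, 0 < A p p) :
    A.det ≠ 0 := by
  rw [Matrix.det_of_lowerTriangular A (lowerTri_blockTriangular hA)]
  exact ne_of_gt (Finset.prod_pos fun i _ => hApos i)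

/-- Uniqueness of the Cholesky factor. -/
private lemma cholesky_unique {k : ℕ} (A B : Matrix (Fin k) (Fin k) ℝ)
    (hA : ∀ p q : Fin k, p < q → A p q = 0) (hApos : ∀ p : Fin k, 0 < A p p)
    (hB : ∀ p q : Fin k, p < q → B p q = 0) (hBpos : ∀ p : Fin k, 0 < B p p)
    (h : A * Aᵀ = B * Bᵀ) : A = B := by
  have hAbt := lowerTri_blockTriangular hA
  have hBbt := lowerTri_blockTriangular hB
  have hAdet := lowerTri_det_ne_zero hA hApos
  have hBdet := lowerTri_det_ne_zero hB hBpos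
  have hAinv : IsUnit A.det := isUnit_iff_ne_zero.mpr hAdet
  have hBinv : IsUnit B.det := isUnit_iff_ne_zero.mpr hBdet
  haveI : Invertible A := A.invertibleOfIsUnitDet hAinv
  haveI : Invertible B := B.invertibleOfIsUnitDet hBinv
  haveI : Invertible Aᵀ := Aᵀ.invertibleOfIsUnitDet (by rwa [Matrix.det_transpose])
  haveI : Invertible Bᵀ := Bᵀ.invertibleOfIsUnitDet (by rwa [Matrix.det_transpose])
  set C := B⁻¹ * A with hC
  -- C is lower triangular
  have hClow : C.BlockTriangular OrderDual.toDual :=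
    (blockTriangular_inv_of_blockTriangular hBbt).mul hAbt
  -- C equals Bᵀ * (Aᵀ)⁻¹, hence upper triangular
  have hCeq : C = Bᵀ * (Aᵀ)⁻¹ := by
    calc C = B⁻¹ * A * Aᵀ * (Aᵀ)⁻¹ := (Matrix.mul_inv_cancel_right_of_invertible _ _).symm
      _ = B⁻¹ * (B * Bᵀ) * (Aᵀ)⁻¹ := by rw [Matrix.mul_assoc B⁻¹ A Aᵀ, h]
      _ = Bᵀ * (Aᵀ)⁻¹ := by rw [Matrix.inv_mul_cancel_left_of_invertible]
  have hCup : C.BlockTriangular id := by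
    rw [hCeq]
    exact hBbt.transpose.mul (blockTriangular_inv_of_blockTriangular hAbt.transpose)
  -- C is diagonal
  have hCdiagz : ∀ i j : Fin k, i ≠ j → C i j = 0 := by
    intro i j hij
    rcases lt_or_gt_of_ne hij with h' | h'
    · exact hClow h'
    · exact hCup h'
  -- A = B * C
  have hABC : A = B * C := by
    rw [hC, ← Matrix.mul_assoc, Matrix.mul_nonsing_inv _ hBinv, Matrix.one_mul]
  -- diagonal entries of C are positive
  have hCpos : ∀ i : Fin k, 0 < C i i := by
    intro i
    have hAi : A i i = B i i * C i i := by
      have : A i i = ∑ j, B i j * C j i := by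
        rw [hABC]; rfl
      rw [this, Finset.sum_eq_single i]
      · intro j _ hji
        rw [hCdiagz j i hji, mul_zero]
      · intro hi; exact absurd (Finset.mem_univ i) hi
    nlinarith [hApos i, hBpos i, hAi]
  -- C * Cᵀ = 1
  have hCC : C * Cᵀ = 1 := by
    calc C * Cᵀ = B⁻¹ * A * (Aᵀ * (Bᵀ)⁻¹) := by
          rw [hC, Matrix.transpose_mul, Matrix.transpose_nonsing_inv, Matrix.mul_assoc]
      _ = B⁻¹ * (A * Aᵀ) * (Bᵀ)⁻¹ := by
          rw [← Matrix.mul_assoc, Matrix.mul_assoc B⁻¹ A Aᵀ]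
      _ = B⁻¹ * (B * Bᵀ) * (Bᵀ)⁻¹ := by rw [h]
      _ = 1 := by rw [Matrix.inv_mul_cancel_left_of_invertible, Matrix.mul_inv_of_invertible]
  -- C = 1
  have hC1 : C = 1 := by
    ext i j
    by_cases hij : i = j
    · subst hij
      have h1 : (C * Cᵀ) i i = C i i * C i i := by
        have : (C * Cᵀ) i i = ∑ j, C i j * C i j := rfl
        rw [this, Finset.sum_eq_single i]
        · intro j _ hji
          rw [hCdiagz i j (fun e => hji e.symm), zero_mul]
        · intro hi; exact absurd (Finset.mem_univ i) hi
      rw [hCC, Matrix.one_apply_eq] at h1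
      have h2 : C i i = 1 := by nlinarith [hCpos i]
      simp [h2]
    · rw [hCdiagz i j hij]
      simp [Matrix.one_apply_ne hij]
  rw [hABC, hC1, Matrix.mul_one]

/-- **Scale invariance of the Cholesky whitening transform.** Let `X ∈ ℝ^{n×k}`
have rank `k` and let `D = diagonal d` with `d j > 0` for all `j`. If `L` and
`L'` are the lower triangular Cholesky factors (with strictly positive
diagonals) of `Xᵀ X` and `(X D)ᵀ (X D)` respectively, then
`(X D) (L'ᵀ)⁻¹ = X (Lᵀ)⁻¹`. -/
theorem cholesky_whitening_scale_invariant
    (n k : ℕ) (hn : 0 < n) (hk : 0 < k) (hnk : k ≤ n)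
    (X : Matrix (Fin n) (Fin k) ℝ) (hrank : X.rank = k)
    (d : Fin k → ℝ) (hd : ∀ j, 0 < d j)
    (L L' : Matrix (Fin k) (Fin k) ℝ)
    (hLlower : ∀ p q : Fin k, p < q → L p q = 0)
    (hLdiag : ∀ p : Fin k, 0 < L p p)
    (hChol : Xᵀ * X = L * Lᵀ)
    (hL'lower : ∀ p q : Fin k, p < q → L' p q = 0)
    (hL'diag : ∀ p : Fin k, 0 < L' p p)
    (hChol' : (X * diagonal d)ᵀ * (X * diagonal d) = L' * L'ᵀ) :
    (X * diagonal d) * (L'ᵀ)⁻¹ = X * (Lᵀ)⁻¹ := by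
  set D := diagonal d with hD
  -- L' = D * L
  have hkey : L' = D * L := by
    refine (cholesky_unique (D * L) L' ?_ ?_ hL'lower hL'diag ?_).symm
    · intro p q hpq
      simp [hD, Matrix.diagonal_mul, hLlower p q hpq]
    · intro p
      simp only [hD, Matrix.diagonal_mul]
      exact mul_pos (hd p) (hLdiag p)
    · have hDt : Dᵀ = D := by simp [hD, Matrix.diagonal_transpose]
      calc D * L * (D * L)ᵀ = D * (L * Lᵀ) * D := by
            simp only [Matrix.transpose_mul, hDt, Matrix.mul_assoc]
        _ = D * (Xᵀ * X) * D := by rw [hChol]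
        _ = (X * D)ᵀ * (X * D) := by
            simp only [Matrix.transpose_mul, hDt, Matrix.mul_assoc]
        _ = L' * L'ᵀ := hChol'
  have hDdet : IsUnit D.det := by
    rw [hD, Matrix.det_diagonal]
    exact isUnit_iff_ne_zero.mpr (ne_of_gt (Finset.prod_pos fun i _ => hd i))
  have hLTdet : IsUnit Lᵀ.det := by
    rw [Matrix.det_transpose]
    exact isUnit_iff_ne_zero.mpr (lowerTri_det_ne_zero hLlower hLdiag)
  have hDt : Dᵀ = D := by simp [hD, Matrix.diagonal_transpose]
  rw [hkey, Matrix.transpose_mul, hDt, Matrix.mul_inv_rev, ← Matrix.mul_assoc,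
    Matrix.mul_assoc X D D⁻¹, Matrix.mul_nonsing_inv _ hDdet, Matrix.mul_one]
end
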